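/- (Validity of the two-sided IM for a singleton assertion.) Fix θ₀ > 0 and let ρ : ℕ → ℕ be injective. Define the belief function bel(x) = ∑_{x' : ρ(x') < ρ(x)} e^{-θ₀} θ₀^{x'} / x'!. If X is Poisson(θ₀)-distributed, then for every α ∈ (0,1), P{ bel(X) ≥ 1 − α } ≤ α; equivalently, the plausibility pl(X) = 1 − bel(X) satisfies P{ pl(X) ≤ α } ≤ α, so the 100(1−α)% plausibility region {θ₀ : pl_X(θ₀) > α} has coverage probability at least 1 − α. -/

import Mathlib

/-!
Order the sample space by the ranking `ρ`. Among the points whose belief is at least `1 - α`,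
take one, `m`, of smallest rank. Every such point has rank at least `ρ m`, so their total mass
is at most the mass of `{x' | ¬ ρ x' < ρ m}`, which is `1 - bel m ≤ α`.
-/

/-- The Poisson(θ) probability mass function. -/
noncomputable def poisPMF (θ : ℝ) (x : ℕ) : ℝ := Real.exp (-θ) * θ ^ x / Nat.factorial x

section Ranking

variable {ι β : Type*} [Preorder β] [WellFoundedLT β] {p : ι → ℝ}

lemma tsum_subtype_mono_of_nonneg (hp0 : 0 ≤ p) (hp : Summable p) {s t : Set ι} (hst : s ⊆ t) :
    ∑' x : s, p x ≤ ∑' x : t, p x := by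
  rw [tsum_subtype, tsum_subtype]
  exact (hp.indicator s).tsum_le_tsum (Set.indicator_le_indicator_of_subset hst hp0)
    (hp.indicator t)

lemma tsum_subtype_le_of_forall_tsum_not_rank_lt_le (hp0 : 0 ≤ p) (hp : Summable p)
    (ρ : ι → β) {A : Set ι} {α : ℝ} (hα : 0 ≤ α)
    (hA : ∀ x ∈ A, ∑' x' : {x' | ¬ ρ x' < ρ x}, p x' ≤ α) :
    ∑' x : A, p x ≤ α := by
  rcases A.eq_empty_or_nonempty with rfl | hne
  · simpa using hα
  obtain ⟨m, hmA, hmin⟩ := (wellFounded_lt.onFun (f := ρ)).has_min A hne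
  calc ∑' x : A, p x ≤ ∑' x' : {x' | ¬ ρ x' < ρ m}, p x' :=
        tsum_subtype_mono_of_nonneg hp0 hp hmin
    _ ≤ α := hA m hmA

theorem tsum_belief_ge_le (hp0 : 0 ≤ p) (hp : HasSum p 1) (ρ : ι → β) {α : ℝ} (hα : 0 ≤ α) :
    ∑' x : {x | 1 - α ≤ ∑' x' : {x' | ρ x' < ρ x}, p x'}, p x ≤ α := by
  refine tsum_subtype_le_of_forall_tsum_not_rank_lt_le hp0 hp.summable ρ hα fun x hx => ?_
  have hbel : 1 - α ≤ ∑' x' : {x' | ρ x' < ρ x}, p x' := hx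
  have hsplit := hp.summable.tsum_subtype_add_tsum_subtype_compl {x' | ρ x' < ρ x}
  rw [hp.tsum_eq] at hsplit
  change ∑' x' : ↥({x' | ρ x' < ρ x}ᶜ), p x' ≤ α
  linarith

end Ranking

lemma hasSum_poisPMF {θ : ℝ} (hθ : 0 ≤ θ) : HasSum (poisPMF θ) 1 := by
  unfold poisPMF
  simpa [Real.coe_toNNReal θ hθ] using ProbabilityTheory.hasSum_one_poissonMeasure θ.toNNReal

lemma poisPMF_nonneg {θ : ℝ} (hθ : 0 ≤ θ) : 0 ≤ poisPMF θ := fun _ => by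
  unfold poisPMF; positivity

theorem two_sided_IM_valid_general (θ₀ : ℝ) (hθ₀ : 0 < θ₀) (ρ : ℕ → ℕ)
    (bel : ℕ → ℝ)
    (hbel : ∀ x : ℕ, bel x = ∑' x' : {x' : ℕ // ρ x' < ρ x}, poisPMF θ₀ x')
    (α : ℝ) (hα : α ∈ Set.Ioo (0:ℝ) 1) :
    (∑' x : {x : ℕ // 1 - α ≤ bel x}, poisPMF θ₀ x) ≤ α ∧
    (∑' x : {x : ℕ // 1 - bel x ≤ α}, poisPMF θ₀ x) ≤ α := by
  have hpl : (fun x => 1 - bel x ≤ α) = fun x => 1 - α ≤ bel x :=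
    funext fun _ => propext sub_le_comm
  obtain rfl : bel = _ := funext hbel
  have hvalid := tsum_belief_ge_le (poisPMF_nonneg hθ₀.le) (hasSum_poisPMF hθ₀.le) ρ hα.1.le
  rw [hpl]
  exact ⟨hvalid, hvalid⟩

/-- Validity of the two-sided IM for a singleton assertion: Fix θ₀ > 0 and
let ρ : ℕ → ℕ be injective. Define the belief function
bel(x) = ∑_{x' : ρ(x') < ρ(x)} e^{-θ₀} θ₀^{x'} / x'!. If X is Poisson(θ₀)-distributed,
then for every α ∈ (0,1), P{ bel(X) ≥ 1 − α } ≤ α; equivalently, the plausibility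
pl(X) = 1 − bel(X) satisfies P{ pl(X) ≤ α } ≤ α. -/
theorem two_sided_IM_valid (θ₀ : ℝ) (hθ₀ : 0 < θ₀) (ρ : ℕ → ℕ)
    (hρ : Function.Injective ρ) (bel : ℕ → ℝ)
    (hbel : ∀ x : ℕ, bel x = ∑' x' : {x' : ℕ // ρ x' < ρ x}, poisPMF θ₀ x')
    (α : ℝ) (hα : α ∈ Set.Ioo (0:ℝ) 1) :
    (∑' x : {x : ℕ // 1 - α ≤ bel x}, poisPMF θ₀ x) ≤ α ∧
    (∑' x : {x : ℕ // 1 - bel x ≤ α}, poisPMF θ₀ x) ≤ α :=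
  two_sided_IM_valid_general θ₀ hθ₀ ρ bel hbel α hα
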